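/- arXiv:1801.09544 — 4 statements merged into one kernel-verified Lean document; each statement's English description precedes it below -/
import Mathlib

section
/- If the range of α is dense in the metric space (X, d), then the range of α* is dense in the metric space (X*, d*). Precisely: for every ε > 0 and every z ∈ X* there exists k ∈ ℕ with d*(α*(k), z) < ε. -/
/-- The Moschovakis extension of a type `X`. -/
inductive Mosch (X : Type*) where
  | base : X → Mosch X
  | o : Mosch X
  | pair : Mosch X → Mosch X → Mosch X

/-- The extension `d*` of the metric of `X` to the Moschovakis extension `X*`. -/
noncomputable def dstar {X : Type*} [MetricSpace X] : Mosch X → Mosch X → ℝ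
  | .base x, .base y => min (dist x y) 1
  | .o, .o => 0
  | .pair u v, .pair u' v' => max (dstar u u') (dstar v v')
  | _, _ => 1

/-- If `rng α` is dense in `(X, d)`, then `rng α*` is dense in `(X*, d*)`:
for every `ε > 0` and every `z ∈ X*` there is `k` with `d*(α*(k), z) < ε`.
Here `α* : ℕ → X*` is the map determined by `α*(0) = o`, `α*(2i+2) = α(i)` and
`α*(2·J(m,n)+1) = (α*(m), α*(n))`, for a bijection `J : ℕ × ℕ → ℕ` with
`J(m,n) ≥ max(m,n)`. -/
theorem dense_range_alphastar {X : Type*} [MetricSpace X]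
    (α : ℕ → X) (hdense : ∀ (x : X) (ε : ℝ), 0 < ε → ∃ i, dist (α i) x < ε)
    (J : ℕ → ℕ → ℕ)
    (hJbij : Function.Bijective (fun p : ℕ × ℕ => J p.1 p.2))
    (hJge : ∀ m n, m ≤ J m n ∧ n ≤ J m n)
    (αs : ℕ → Mosch X)
    (h0 : αs 0 = Mosch.o)
    (h2 : ∀ i, αs (2 * i + 2) = Mosch.base (α i))
    (hpair : ∀ m n, αs (2 * J m n + 1) = Mosch.pair (αs m) (αs n)) :
    ∀ (ε : ℝ), 0 < ε → ∀ z : Mosch X, ∃ k : ℕ, dstar (αs k) z < ε := by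
  intro ε hε z
  induction z with
  | base x =>
    obtain ⟨i, hi⟩ := hdense x ε hε
    exact ⟨2 * i + 2, by rw [h2]; exact lt_of_le_of_lt (min_le_left _ _) hi⟩
  | o => exact ⟨0, by rw [h0]; simpa [dstar] using hε⟩
  | pair u v hu hv =>
    obtain ⟨m, hm⟩ := hu
    obtain ⟨n, hn⟩ := hv
    exact ⟨2 * J m n + 1, by rw [hpair]; exact max_lt hm hn⟩
end

section
/- If the topology generated on X by the base U is T₀ (i.e., for distinct x, x' ∈ X some U_i contains exactly one of them), then U* separates points of X*: for all distinct z, z' ∈ X*, there exists i ∈ ℕ such that U*_i contains exactly one of z and z'. -/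
/-- If the base `U` separates points of `X` (T₀), then `U*` separates points of
`X*`: for distinct `z, z'` some `U*_i` contains exactly one of them. -/
theorem Ustar_T0 {X : Type*}
    (U : ℕ → Set X) (hcov : ∀ x : X, ∃ i, x ∈ U i)
    (hT0 : ∀ x x' : X, x ≠ x' →
      ∃ i, (x ∈ U i ∧ x' ∉ U i) ∨ (x' ∈ U i ∧ x ∉ U i))
    (J : ℕ → ℕ → ℕ)
    (hJbij : Function.Bijective (fun p : ℕ × ℕ => J p.1 p.2))
    (Us : ℕ → Set (Mosch X))
    (h0 : Us 0 = {Mosch.o})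
    (h2 : ∀ i, Us (2 * i + 2) = Mosch.base '' U i)
    (hpair : ∀ m n, Us (2 * J m n + 1) =
      {z : Mosch X | ∃ u ∈ Us m, ∃ v ∈ Us n, z = Mosch.pair u v}) :
    ∀ z z' : Mosch X, z ≠ z' →
      ∃ i, (z ∈ Us i ∧ z' ∉ Us i) ∨ (z' ∈ Us i ∧ z ∉ Us i) := by
  -- membership characterizations
  have memB : ∀ i (x : X), Mosch.base x ∈ Us (2 * i + 2) ↔ x ∈ U i := by
    intro i x
    rw [h2]
    constructor
    · rintro ⟨y, hy, he⟩
      cases he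
      exact hy
    · intro hx
      exact ⟨x, hx, rfl⟩
  have memP : ∀ m n (a b : Mosch X),
      Mosch.pair a b ∈ Us (2 * J m n + 1) ↔ a ∈ Us m ∧ b ∈ Us n := by
    intro m n a b
    rw [hpair]
    constructor
    · rintro ⟨u, hu, v, hv, he⟩
      injection he with h1 h2
      subst h1; subst h2
      exact ⟨hu, hv⟩
    · rintro ⟨ha, hb⟩
      exact ⟨a, ha, b, hb, rfl⟩
  have oMem : Mosch.o (X := X) ∈ Us 0 := by rw [h0]; rfl
  have notO0 : ∀ z : Mosch X, z ≠ Mosch.o → z ∉ Us 0 := by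
    intro z hz h
    rw [h0] at h
    exact hz h
  have notB : ∀ i (z : Mosch X), (∀ x : X, z ≠ Mosch.base x) → z ∉ Us (2 * i + 2) := by
    intro i z hz h
    rw [h2] at h
    obtain ⟨y, _, he⟩ := h
    exact hz y he.symm
  have notP : ∀ m n (z : Mosch X), (∀ a b : Mosch X, z ≠ Mosch.pair a b) →
      z ∉ Us (2 * J m n + 1) := by
    intro m n z hz h
    rw [hpair] at h
    obtain ⟨u, _, v, _, he⟩ := h
    exact hz u v he
  -- covering
  have hcov' : ∀ z : Mosch X, ∃ i, z ∈ Us i := by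
    intro z
    induction z with
    | base x =>
      obtain ⟨i, hi⟩ := hcov x
      exact ⟨2 * i + 2, (memB i x).2 hi⟩
    | o => exact ⟨0, oMem⟩
    | pair u v ihu ihv =>
      obtain ⟨m, hm⟩ := ihu
      obtain ⟨n, hn⟩ := ihv
      exact ⟨2 * J m n + 1, (memP m n u v).2 ⟨hm, hn⟩⟩
  intro z
  induction z with
  | base x =>
    intro z' hne
    obtain ⟨i, hi⟩ := hcov x
    cases z' with
    | base x' =>
      have hx : x ≠ x' := fun h => hne (by rw [h])
      obtain ⟨j, hj⟩ := hT0 x x' hx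
      refine ⟨2 * j + 2, ?_⟩
      rcases hj with ⟨ha, hb⟩ | ⟨ha, hb⟩
      · exact Or.inl ⟨(memB j x).2 ha, fun h => hb ((memB j x').1 h)⟩
      · exact Or.inr ⟨(memB j x').2 ha, fun h => hb ((memB j x).1 h)⟩
    | o =>
      exact ⟨0, Or.inr ⟨oMem, notO0 _ (by intro h; cases h)⟩⟩
    | pair u v =>
      exact ⟨2 * i + 2, Or.inl ⟨(memB i x).2 hi, notB i _ (by intro y h; cases h)⟩⟩
  | o =>
    intro z' hne
    exact ⟨0, Or.inl ⟨oMem, notO0 _ (Ne.symm hne)⟩⟩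
  | pair u v ihu ihv =>
    intro z' hne
    obtain ⟨m, hm⟩ := hcov' u
    obtain ⟨n, hn⟩ := hcov' v
    cases z' with
    | base x =>
      exact ⟨2 * J m n + 1, Or.inl ⟨(memP m n u v).2 ⟨hm, hn⟩,
        notP m n _ (by intro a b h; cases h)⟩⟩
    | o =>
      exact ⟨0, Or.inr ⟨oMem, notO0 _ (by intro h; cases h)⟩⟩
    | pair u' v' =>
      by_cases hu : u = u'
      · have hv : v ≠ v' := by
          intro h
          exact hne (by rw [hu, h])
        obtain ⟨j, hj⟩ := ihv v' hv
        rcases hj with ⟨ha, hb⟩ | ⟨ha, hb⟩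
        · refine ⟨2 * J m j + 1, Or.inl ⟨(memP m j u v).2 ⟨hm, ha⟩, fun h => ?_⟩⟩
          exact hb ((memP m j u' v').1 h).2
        · refine ⟨2 * J m j + 1, Or.inr ⟨(memP m j u' v').2 ⟨hu ▸ hm, ha⟩, fun h => ?_⟩⟩
          exact hb ((memP m j u v).1 h).2
      · obtain ⟨j, hj⟩ := ihu u' hu
        obtain ⟨k, hk⟩ := hcov' v'
        rcases hj with ⟨ha, hb⟩ | ⟨ha, hb⟩
        · refine ⟨2 * J j n + 1, Or.inl ⟨(memP j n u v).2 ⟨ha, hn⟩, fun h => ?_⟩⟩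
          exact hb ((memP j n u' v').1 h).1
        · refine ⟨2 * J j k + 1, Or.inr ⟨(memP j k u' v').2 ⟨ha, hk⟩, fun h => ?_⟩⟩
          exact hb ((memP j k u v).1 h).1
end

section
/- If the representation ρ of X is injective, then the induced representation ρ* of the Moschovakis extension X* is injective. -/
/-- The induced representation `ρ*` of `X*`, as a (partial, single-valued)
relation between `ℕ^ℕ` and `X*`:
`ρ*(λk. 2·q(k)+2) = ρ(q)` for `q ∈ dom ρ`; `ρ*(λk. 0) = o`;
`ρ*(λk. 2·J(q(k),r(k))+1) = (ρ*(q), ρ*(r))`; `ρ*` is defined nowhere else. -/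
inductive RhoStar {X : Type*} (J : ℕ → ℕ → ℕ) (ρ : (ℕ → ℕ) →. X) :
    (ℕ → ℕ) → Mosch X → Prop where
  | base {q : ℕ → ℕ} {x : X} : x ∈ ρ q →
      RhoStar J ρ (fun k => 2 * q k + 2) (Mosch.base x)
  | o : RhoStar J ρ (fun _ => 0) Mosch.o
  | pair {q r : ℕ → ℕ} {u v : Mosch X} :
      RhoStar J ρ q u → RhoStar J ρ r v →
      RhoStar J ρ (fun k => 2 * J (q k) (r k) + 1) (Mosch.pair u v)

/-- If `ρ` is injective then so is the induced representation `ρ*`. -/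
theorem rhoStar_injective {X : Type*} (J : ℕ → ℕ → ℕ) (ρ : (ℕ → ℕ) →. X)
    (hJbij : Function.Bijective (fun p : ℕ × ℕ => J p.1 p.2))
    (hJge : ∀ m n, m ≤ J m n ∧ n ≤ J m n)
    (hρinj : ∀ (p p' : ℕ → ℕ) (x : X), x ∈ ρ p → x ∈ ρ p' → p = p') :
    ∀ (p p' : ℕ → ℕ) (z : Mosch X),
      RhoStar J ρ p z → RhoStar J ρ p' z → p = p' := by
  intro p p' z h h'
  induction h generalizing p' with
  | @base q x hq =>
    cases h' with
    | @base q' x' hq' =>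
      have := hρinj q q' x hq hq'
      subst this; rfl
  | o => cases h'; rfl
  | @pair q r u v hu hv ihu ihv =>
    cases h' with
    | @pair q' r' _ _ hu' hv' =>
      have h1 := ihu q' hu'
      have h2 := ihv r' hv'
      subst h1; subst h2; rfl
end

section
/- The set of computable elements of (X*, ρ*) is exactly the closure under the pairing operation of the set {o} ∪ {computable elements of (X, ρ)}. -/
/-- An element of the represented space `(X*, ρ*)` is computable if it is the
value of `ρ*` at a computable point of Baire space. -/
def MComputablePt {X : Type*} (J : ℕ → ℕ → ℕ) (ρ : (ℕ → ℕ) →. X)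
    (z : Mosch X) : Prop :=
  ∃ p : ℕ → ℕ, Computable p ∧ RhoStar J ρ p z

/-- The closure of a set `S ⊆ X*` under the pairing operation. -/
inductive PairClosure {X : Type*} (S : Set (Mosch X)) : Mosch X → Prop where
  | mem {z : Mosch X} : z ∈ S → PairClosure S z
  | pair {u v : Mosch X} : PairClosure S u → PairClosure S v →
      PairClosure S (Mosch.pair u v)

/-! The codings `n ↦ 2n + 2` and `(a, b) ↦ 2 J(a, b) + 1` used by `ρ*` are computable
injections, and a computable injection `f` can be inverted on its range by unbounded search
for a code `m` with `f (decode m) = n`. So a computable name of a base element or of a pair has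
computable components, and the two inclusions are inductions on `ρ*`-names and on the pair
closure respectively. -/

open Encodable

theorem Computable.of_injective_comp {σ α β : Type*} [Primcodable σ] [Primcodable α]
    [Primcodable β] [DecidableEq β] {f : α → β} {h : σ → α}
    (hf : Computable f) (hinj : Function.Injective f) (hfh : Computable fun s => f (h s)) :
    Computable h := by
  set search : σ →. ℕ := fun s =>
    Nat.rfind fun m => Part.some (decide ((decode (α := α) m).map f = some (f (h s))))
  have hmatch : Computable₂ fun s m => decide ((decode (α := α) m).map f = some (f (h s))) :=
    Primrec.eq.decide.to_comp.comp
      (Computable.option_map (Computable.decode.comp Computable.snd) (hf.comp Computable.snd).to₂)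
      (Computable.option_some.comp (hfh.comp Computable.fst))
  have hsearch : Partrec search := Partrec.rfind hmatch.partrec₂
  refine (hsearch.bind (Computable.decode.comp Computable.snd).ofOption.to₂).of_eq_tot
    fun s => ?_
  have hdom : (search s).Dom := Nat.rfind_dom.2 ⟨encode (h s), by simp, fun _ => trivial⟩
  obtain ⟨a, ha, hfa⟩ := Option.map_eq_some_iff.1
    (of_decide_eq_true (Part.mem_some_iff.1 (Nat.rfind_spec (Part.get_mem hdom))).symm)
  exact Part.mem_bind_iff.2 ⟨_, Part.get_mem hdom, by simp [ha, hinj hfa]⟩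

theorem computable_two_mul_add (c : ℕ) : Computable fun n : ℕ => 2 * n + c :=
  (Primrec.nat_add.comp (Primrec.nat_mul.comp (Primrec.const 2) Primrec.id)
    (Primrec.const c)).to_comp

theorem computable_two_mul_add_comp_iff {α : Type*} [Primcodable α] (c : ℕ) {q : α → ℕ} :
    Computable (fun a => 2 * q a + c) ↔ Computable q :=
  ⟨(computable_two_mul_add c).of_injective_comp fun _ _ hab => by simp only at hab; omega,
    (computable_two_mul_add c).comp⟩

theorem computable_and_of_computable_pairCode {J : ℕ → ℕ → ℕ}
    (hJinj : Function.Injective (fun p : ℕ × ℕ => J p.1 p.2))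
    (hJcomp : Computable (fun p : ℕ × ℕ => J p.1 p.2)) {q r : ℕ → ℕ}
    (h : Computable fun k => 2 * J (q k) (r k) + 1) : Computable q ∧ Computable r := by
  have hqr : Computable fun k => (q k, r k) :=
    hJcomp.of_injective_comp hJinj ((computable_two_mul_add_comp_iff 1).1 h)
  exact ⟨Computable.fst.comp hqr, Computable.snd.comp hqr⟩

def computablePts {X : Type*} (ρ : (ℕ → ℕ) →. X) : Set X :=
  {x | ∃ q : ℕ → ℕ, Computable q ∧ x ∈ ρ q}

section
variable {X : Type*} {J : ℕ → ℕ → ℕ} {ρ : (ℕ → ℕ) →. X}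

theorem RhoStar.pairClosure_of_computable
    (hJinj : Function.Injective (fun p : ℕ × ℕ => J p.1 p.2))
    (hJcomp : Computable (fun p : ℕ × ℕ => J p.1 p.2)) {p : ℕ → ℕ} {z : Mosch X}
    (hz : RhoStar J ρ p z) (hp : Computable p) :
    PairClosure (insert Mosch.o (Mosch.base '' computablePts ρ)) z := by
  induction hz with
  | @base q x hx =>
    exact .mem (.inr ⟨x, ⟨q, (computable_two_mul_add_comp_iff 2).1 hp, hx⟩, rfl⟩)
  | o => exact .mem (.inl rfl)
  | pair _ _ ihq ihr =>
    obtain ⟨hq, hr⟩ := computable_and_of_computable_pairCode hJinj hJcomp hp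
    exact .pair (ihq hq) (ihr hr)

theorem PairClosure.mComputablePt (hJcomp : Computable (fun p : ℕ × ℕ => J p.1 p.2))
    {z : Mosch X} (hz : PairClosure (insert Mosch.o (Mosch.base '' computablePts ρ)) z) :
    MComputablePt J ρ z := by
  induction hz with
  | mem hz =>
    rcases hz with rfl | ⟨x, ⟨q, hq, hx⟩, rfl⟩
    · exact ⟨_, Computable.const 0, .o⟩
    · exact ⟨_, (computable_two_mul_add_comp_iff 2).2 hq, .base hx⟩
  | pair _ _ ihu ihv =>
    obtain ⟨q, hq, hqu⟩ := ihu
    obtain ⟨r, hr, hrv⟩ := ihv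
    exact ⟨_, (computable_two_mul_add 1).comp (hJcomp.comp (hq.pair hr)), .pair hqu hrv⟩

end

theorem computablePt_eq_pairClosure_general {X : Type*} (J : ℕ → ℕ → ℕ)
    (ρ : (ℕ → ℕ) →. X)
    (hJbij : Function.Bijective (fun p : ℕ × ℕ => J p.1 p.2))
    (hJcomp : Computable (fun p : ℕ × ℕ => J p.1 p.2)) :
    ∀ z : Mosch X, MComputablePt J ρ z ↔
      PairClosure
        (insert Mosch.o
          (Mosch.base '' {x : X | ∃ q : ℕ → ℕ, Computable q ∧ x ∈ ρ q})) z :=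
  fun _ => ⟨fun ⟨_, hp, hz⟩ => hz.pairClosure_of_computable hJbij.injective hJcomp hp,
    PairClosure.mComputablePt hJcomp⟩

/-- The computable elements of `(X*, ρ*)` are exactly the closure under
pairing of `{o}` together with the computable elements of `(X, ρ)`. -/
theorem computablePt_eq_pairClosure {X : Type*} (J : ℕ → ℕ → ℕ)
    (ρ : (ℕ → ℕ) →. X)
    (hJbij : Function.Bijective (fun p : ℕ × ℕ => J p.1 p.2))
    (hJge : ∀ m n, m ≤ J m n ∧ n ≤ J m n)
    (hJcomp : Computable (fun p : ℕ × ℕ => J p.1 p.2)) :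
    ∀ z : Mosch X, MComputablePt J ρ z ↔
      PairClosure
        (insert Mosch.o
          (Mosch.base '' {x : X | ∃ q : ℕ → ℕ, Computable q ∧ x ∈ ρ q})) z :=
  computablePt_eq_pairClosure_general J ρ hJbij hJcomp
end
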